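/- Let u, v, w be 2×2 complex matrices satisfying ⁅u,v⁆ = w, ⁅v,w⁆ = u and ⁅w,u⁆ = v, and let α, β be real numbers with sin(α/2) ≠ 0. Then, as ε → 0, the difference exp(α•u) · exp((ε·β)•v) − exp(α•u + (ε·β·α/2)•(cot(α/2) • v + w)) is O(ε²) (in any matrix norm). -/

import Mathlib

/-!
Differentiating `exp (exp (t • Z) * A * exp (-t • Z)) = exp (t • Z) * exp A * exp (-t • Z)`
at `t = 0` shows that the derivative of `exp` at `A` in the direction `⁅Z, A⁆` is `⁅Z, exp A⁆`.
Take `A = α • u` and `Z = (β / 2) • (cot (α / 2) • w - v)`: then `⁅Z, A⁆` is the perturbation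
`(β * α / 2) • (cot (α / 2) • v + w)`, and since `ad u` rotates the plane spanned by `v` and `w`,
`⁅Z, exp A⁆ = exp A * (β • v)`. So both terms of the difference are analytic in `ε`, agree at
`ε = 0` and have the same derivative there, which makes the difference `O(ε²)`.
-/

open NormedSpace Asymptotics Filter Topology

theorem AnalyticAt.isBigO_sq_of_hasDerivAt_zero {𝕜 E : Type*} [NontriviallyNormedField 𝕜]
    [NormedAddCommGroup E] [NormedSpace 𝕜 E] {f : 𝕜 → E} (hf : AnalyticAt 𝕜 f 0)
    (h₀ : f 0 = 0) (hd : HasDerivAt f 0 0) : f =O[𝓝 0] fun x => x ^ 2 := by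
  obtain ⟨p, hp⟩ := hf
  have hp₁ : ∀ x : 𝕜, p 1 (fun _ => x) = 0 := fun x => by
    simpa using congrArg (fun L : 𝕜 →L[𝕜] E => L x) (hp.hasFDerivAt.unique hd.hasFDerivAt)
  have hsum : ∀ x : 𝕜, p.partialSum 2 x = 0 := fun x => by
    simp only [FormalMultilinearSeries.partialSum, Finset.sum_range_succ, Finset.sum_range_zero,
      hp.coeff_zero, h₀, hp₁, add_zero]
  have hsq : (fun x : 𝕜 => ‖x‖ ^ 2) =O[𝓝 0] fun x => x ^ 2 :=
    (isBigO_refl (fun x : 𝕜 => x ^ 2) (𝓝 0)).norm_left.congr_left fun x => norm_pow x 2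
  simpa [hsum] using (hp.isBigO_sub_partialSum_pow 2).trans hsq

theorem Real.cot_half_mul_sin {x : ℝ} (h : Real.sin (x / 2) ≠ 0) :
    Real.cot (x / 2) * Real.sin x = 1 + Real.cos x := by
  have hsin : Real.sin x = 2 * Real.sin (x / 2) * Real.cos (x / 2) := by
    rw [← Real.sin_two_mul]; ring_nf
  have hcos : Real.cos x = 2 * Real.cos (x / 2) ^ 2 - 1 := by
    rw [← Real.cos_two_mul]; ring_nf
  rw [Real.cot_eq_cos_div_sin, hsin, hcos]
  field_simp
  ring

theorem Real.cot_half_mul_one_sub_cos {x : ℝ} (h : Real.sin (x / 2) ≠ 0) :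
    Real.cot (x / 2) * (1 - Real.cos x) = Real.sin x := by
  have hsin : Real.sin x = 2 * Real.sin (x / 2) * Real.cos (x / 2) := by
    rw [← Real.sin_two_mul]; ring_nf
  have hcos : Real.cos x = 2 * Real.cos (x / 2) ^ 2 - 1 := by
    rw [← Real.cos_two_mul]; ring_nf
  rw [Real.cot_eq_cos_div_sin, hsin, hcos]
  field_simp
  linear_combination (-2 * Real.cos (x / 2)) * Real.sin_sq_add_cos_sq (x / 2)

theorem lie_smul_cot_half_smul_sub_smul {𝔸 : Type*} [Ring 𝔸] [Algebra ℝ 𝔸] {u v w : 𝔸}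
    (huv : ⁅u, v⁆ = w) (hwu : ⁅w, u⁆ = v) (α β : ℝ) :
    ⁅(β / 2) • (Real.cot (α / 2) • w - v), α • u⁆ = (β * α / 2) • (Real.cot (α / 2) • v + w) := by
  rw [Ring.lie_def, sub_eq_iff_eq_add] at huv hwu
  simp only [Ring.lie_def, mul_sub, sub_mul, mul_smul_comm, smul_mul_assoc, huv, hwu]
  module

namespace NormedSpace

variable {𝔸 : Type*} [NormedRing 𝔸] [NormedAlgebra ℝ 𝔸] [CompleteSpace 𝔸]

theorem exp_mul_exp_neg (x : 𝔸) : exp x * exp (-x) = 1 := by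
  let := NormedAlgebra.restrictScalars ℚ ℝ 𝔸
  rw [← exp_add_of_commute (Commute.refl x).neg_right, add_neg_cancel, exp_zero]

theorem exp_neg_mul_exp (x : 𝔸) : exp (-x) * exp x = 1 := by
  simpa using exp_mul_exp_neg (-x)

theorem exp_conj_exp_smul (Z A : 𝔸) (t : ℝ) :
    exp (exp (t • Z) * A * exp (t • -Z)) = exp (t • Z) * exp A * exp (t • -Z) := by
  let := NormedAlgebra.restrictScalars ℚ ℝ 𝔸
  rw [smul_neg]
  exact exp_units_conj ⟨_, _, exp_mul_exp_neg _, exp_neg_mul_exp _⟩ A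

theorem hasDerivAt_exp_smul_mul_mul_exp_smul_neg (Z B : 𝔸) :
    HasDerivAt (fun t : ℝ => exp (t • Z) * B * exp (t • -Z)) ⁅Z, B⁆ 0 := by
  refine (((hasDerivAt_exp_smul_const' Z (0 : ℝ)).mul_const B).mul
    (hasDerivAt_exp_smul_const' (-Z) (0 : ℝ))).congr_deriv ?_
  simp [Ring.lie_def, sub_eq_add_neg]

theorem fderiv_exp_lie (Z A : 𝔸) : fderiv ℝ exp A ⁅Z, A⁆ = ⁅Z, exp A⁆ := by
  have h := ((exp_analytic A).differentiableAt.hasFDerivAt).comp_hasDerivAt_of_eq 0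
    (hasDerivAt_exp_smul_mul_mul_exp_smul_neg Z A) (by simp)
  refine h.unique ?_
  simpa only [Function.comp_def, exp_conj_exp_smul] using
    hasDerivAt_exp_smul_mul_mul_exp_smul_neg Z (exp A)

theorem isBigO_exp_mul_exp_smul_sub_exp_add_smul_lie {A Z y : 𝔸}
    (h : ⁅Z, exp A⁆ = exp A * y) :
    (fun ε : ℝ => exp A * exp (ε • y) - exp (A + ε • ⁅Z, A⁆)) =O[𝓝 0] fun ε => ε ^ 2 := by
  have hline : HasDerivAt (fun ε : ℝ => A + ε • ⁅Z, A⁆) ⁅Z, A⁆ 0 := by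
    simpa using ((hasDerivAt_id (0 : ℝ)).smul_const ⁅Z, A⁆).const_add A
  have hexp := ((exp_analytic A).differentiableAt.hasFDerivAt).comp_hasDerivAt_of_eq 0 hline
    (by simp)
  rw [fderiv_exp_lie] at hexp
  refine AnalyticAt.isBigO_sq_of_hasDerivAt_zero ?_ (by simp) ?_
  · exact (analyticAt_const.mul ((exp_analytic _).fun_comp (by fun_prop))).sub
      ((exp_analytic _).fun_comp (by fun_prop))
  · refine (((hasDerivAt_exp_smul_const' y (0 : ℝ)).const_mul (exp A)).sub hexp).congr_deriv ?_
    simp [h]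

theorem exp_smul_mul_cos_smul_sub_sin_smul {u a b : 𝔸} (hab : ⁅u, a⁆ = b) (hba : ⁅u, b⁆ = -a)
    (t : ℝ) : exp (t • u) * (Real.cos t • a - Real.sin t • b) = a * exp (t • u) := by
  have hconj_deriv : ∀ t : ℝ, HasDerivAt
      (fun t => exp (t • u) * (Real.cos t • a - Real.sin t • b) * exp (t • -u)) 0 t := fun t => by
    have hrot := ((Real.hasDerivAt_cos t).smul_const a).sub ((Real.hasDerivAt_sin t).smul_const b)
    refine (((hasDerivAt_exp_smul_const u t).mul hrot).mul
      (hasDerivAt_exp_smul_const' (-u) t)).congr_deriv ?_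
    have hcancel :
        ⁅u, Real.cos t • a - Real.sin t • b⁆ + (-Real.sin t • a - Real.cos t • b) = 0 := by
      rw [Ring.lie_def, sub_eq_iff_eq_add] at hab hba
      simp only [Ring.lie_def, mul_sub, sub_mul, mul_smul_comm, smul_mul_assoc, hab, hba]
      module
    calc _ = exp (t • u) * (⁅u, Real.cos t • a - Real.sin t • b⁆ +
          (-Real.sin t • a - Real.cos t • b)) * exp (t • -u) := by
          simp only [Ring.lie_def, Pi.sub_apply, Pi.mul_apply]; noncomm_ring
      _ = 0 := by rw [hcancel, mul_zero, zero_mul]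
  have hconj : exp (t • u) * (Real.cos t • a - Real.sin t • b) * exp (t • -u) = a := by
    simpa using is_const_of_deriv_eq_zero (fun t => (hconj_deriv t).differentiableAt)
      (fun t => (hconj_deriv t).deriv) t 0
  calc _ = exp (t • u) * (Real.cos t • a - Real.sin t • b) * (exp (t • -u) * exp (t • u)) := by
        rw [smul_neg, exp_neg_mul_exp, mul_one]
    _ = a * exp (t • u) := by rw [← mul_assoc, hconj]

theorem lie_smul_cot_half_smul_sub_exp_smul {u v w : 𝔸} (huv : ⁅u, v⁆ = w) (hwu : ⁅w, u⁆ = v)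
    {α : ℝ} (hα : Real.sin (α / 2) ≠ 0) (β : ℝ) :
    ⁅(β / 2) • (Real.cot (α / 2) • w - v), exp (α • u)⁆ = exp (α • u) * (β • v) := by
  have huw : ⁅u, w⁆ = -v := by rw [← hwu, Ring.lie_def, Ring.lie_def, neg_sub]
  have hu_neg_v : ⁅u, -v⁆ = -w := by rw [← huv, Ring.lie_def, Ring.lie_def]; noncomm_ring
  have hv := exp_smul_mul_cos_smul_sub_sin_smul huv huw α
  have hw := exp_smul_mul_cos_smul_sub_sin_smul huw hu_neg_v α
  have hcoeff : (β / 2) • (Real.cot (α / 2) • (Real.cos α • w - Real.sin α • -v) -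
      (Real.cos α • v - Real.sin α • w)) - (β / 2) • (Real.cot (α / 2) • w - v) = β • v := by
    linear_combination (norm := module) (β / 2) • (Real.cot_half_mul_sin hα • v -
      Real.cot_half_mul_one_sub_cos hα • w)
  rw [Ring.lie_def, smul_mul_assoc, sub_mul, smul_mul_assoc, ← hv, ← hw, ← hcoeff]
  simp only [mul_sub, mul_smul_comm]

theorem isBigO_exp_mul_exp_sub_exp_of_lie {u v w : 𝔸} (huv : ⁅u, v⁆ = w) (hwu : ⁅w, u⁆ = v)
    {α : ℝ} (hα : Real.sin (α / 2) ≠ 0) (β : ℝ) :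
    (fun ε : ℝ => exp (α • u) * exp ((ε * β) • v) -
        exp (α • u + (ε * β * α / 2) • (Real.cot (α / 2) • v + w))) =O[𝓝 0] fun ε => ε ^ 2 := by
  have h := isBigO_exp_mul_exp_smul_sub_exp_add_smul_lie
    (lie_smul_cot_half_smul_sub_exp_smul huv hwu hα β)
  rw [lie_smul_cot_half_smul_sub_smul huv hwu] at h
  simpa only [smul_smul, mul_div_assoc, mul_assoc] using h

end NormedSpace

open scoped Matrix Topology

attribute [local instance] Matrix.normedAddCommGroup

theorem Matrix.norm_le_linfty_opNorm {m n α : Type*} [Fintype m] [Fintype n]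
    [NormedAddCommGroup α] (A : Matrix m n α) :
    ‖A‖ ≤ @norm _ Matrix.linftyOpNormedAddCommGroup.toNorm A := by
  let := Matrix.linftyOpNormedAddCommGroup (m := m) (n := n) (α := α)
  refine (Matrix.norm_le_iff (norm_nonneg _)).2 fun i j => ?_
  exact (PiLp.norm_apply_le (WithLp.toLp 1 (A i)) j).trans
    (norm_le_pi_norm (fun i => WithLp.toLp 1 (A i)) i)

theorem su2_exp_perturb_orth (u v w : Matrix (Fin 2) (Fin 2) ℂ)
    (huv : ⁅u, v⁆ = w) (hwu : ⁅w, u⁆ = v)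
    (α β : ℝ) (hα : Real.sin (α / 2) ≠ 0) :
    (fun ε : ℝ =>
        NormedSpace.exp (α • u) * NormedSpace.exp ((ε * β) • v) -
          NormedSpace.exp
            (α • u + (ε * β * α / 2) • (Real.cot (α / 2) • v + w)))
      =O[𝓝 0] fun ε : ℝ => ε ^ 2 := by
  rw [isBigO_iff]
  -- The entrywise sup norm is not submultiplicative; the `L∞` operator norm is, and dominates it.
  let normedRing : NormedRing (Matrix (Fin 2) (Fin 2) ℂ) := Matrix.linftyOpNormedRing
  let : NormedAlgebra ℝ (Matrix (Fin 2) (Fin 2) ℂ) := Matrix.linftyOpNormedAlgebra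
  have : @CompleteSpace _ normedRing.toUniformSpace := FiniteDimensional.complete ℝ _
  obtain ⟨c, hc⟩ := isBigO_iff.1 (isBigO_exp_mul_exp_sub_exp_of_lie huv hwu hα β)
  exact ⟨c, hc.mono fun ε hε => (Matrix.norm_le_linfty_opNorm _).trans hε⟩
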